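/- The creation operator acts on the (q,α)-deformed Hermite functions by raising the index: for every integer n ≥ 0 and every real x ≠ 0, (q^{2α+3/2}/(√(1−q)·x)) · [ √(1+q^{−2α−1}x²) · φ_n^α(qx;q) − q^{−(2α+1)θ(n)} · φ_n^α(x;q) ] = √(⟦n+1⟧_{q,α}) · φ_{n+1}^α(x;q), where θ(n)=1 if n is odd and θ(n)=0 if n is even. -/

import Mathlib

open scoped BigOperators
open Real Filter

noncomputable section

/-- q-shifted factorial `(a;q)_n`. -/
def qPoch (a q : ℝ) (n : ℕ) : ℝ := ∏ k ∈ Finset.range n, (1 - a * q ^ k)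

/-- infinite q-shifted factorial `(a;q)_∞`. -/
def qPochInf (a q : ℝ) : ℝ := ∏' k : ℕ, (1 - a * q ^ k)

/-- q-number `⟦x⟧_q = (1-q^x)/(1-q)`. -/
def qNumber (q x : ℝ) : ℝ := (1 - q ^ x) / (1 - q)

/-- generalized q-integer `⟦n⟧_{q,α}`: equals `⟦n⟧_q` for even `n` and
`⟦n+2α+1⟧_q` for odd `n` (so `⟦2m+1⟧_{q,α} = ⟦2m+2α+2⟧_q`). -/
def qNumAlpha (q α : ℝ) (n : ℕ) : ℝ :=
  if n % 2 = 0 then qNumber q n else qNumber q (n + 2 * α + 1)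

/-- generalized q-factorial `n!_{q,α}`. -/
def qFactAlpha (q α : ℝ) (n : ℕ) : ℝ := ∏ k ∈ Finset.range n, qNumAlpha q α (k + 1)

/-- generalized q-shifted factorial `(q;q)_{n,α} = (1-q)^n n!_{q,α}`. -/
def qPochAlpha (q α : ℝ) (n : ℕ) : ℝ := (1 - q) ^ n * qFactAlpha q α n

/-- generalized discrete q-Hermite II polynomials `h̃_{n,α}(x;q)`. -/
def hTilde (q α : ℝ) (n : ℕ) (x : ℝ) : ℝ :=
  qPoch q q n * ∑ k ∈ Finset.range (n / 2 + 1),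
    (-1 : ℝ) ^ k * q ^ ((k * (2 * k + 1) : ℤ) - (2 * n * k : ℤ)) * x ^ (n - 2 * k) /
      (qPoch (q ^ 2) (q ^ 2) k * qPochAlpha q α (n - 2 * k))

/-- the weight `ω_α(x;q) = e_{q²}(-q^{-2α-1}x²) = 1/∏_{k≥0}(1+q^{-2α-1}x²q^{2k})`. -/
def omegaAlpha (q α x : ℝ) : ℝ :=
  (∏' k : ℕ, (1 + q ^ (-(2 * α + 1)) * x ^ 2 * q ^ (2 * k)))⁻¹

/-- normalization constant `c_α`. -/
def cAlpha (q α : ℝ) : ℝ :=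
  Real.sqrt (qPochInf (-q ^ (-(2 * α + 1))) (q ^ 2) * qPochInf (-q ^ (2 * α + 3)) (q ^ 2) *
      qPochInf (q ^ (2 * α + 2)) (q ^ 2) /
    (2 * (1 - q) *
      (qPochInf (-q) (q ^ 2) * qPochInf (-q) (q ^ 2) * qPochInf (q ^ 2) (q ^ 2))))

/-- normalization constant `d_{n,α} = c_α q^{n²/2} (q;q)_{n,α}^{1/2} / (q;q)_n`. -/
def dAlpha (q α : ℝ) (n : ℕ) : ℝ :=
  cAlpha q α * q ^ (((n : ℝ) ^ 2) / 2) * Real.sqrt (qPochAlpha q α n) / qPoch q q n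

/-- the (q,α)-deformed Hermite functions `φ_n^α(x;q)`. -/
def phiQ (q α : ℝ) (n : ℕ) (x : ℝ) : ℝ :=
  dAlpha q α n * Real.sqrt (omegaAlpha q α x) * hTilde q α n x

/-- parity indicator `θ(n)`: 1 if `n` is odd, 0 if `n` is even. -/
def theta (n : ℕ) : ℝ := if n % 2 = 1 then 1 else 0

/-- the q-Gamma function `Γ_q(z) = (q;q)_∞ / (q^z;q)_∞ · (1-q)^{1-z}`. -/
def qGammaF (q z : ℝ) : ℝ := qPochInf q q / qPochInf (q ^ z) q * (1 - q) ^ (1 - z)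

/-- Rosenblum generalized factorial `γ_ν(n)`. -/
def gammaGen (ν : ℝ) (n : ℕ) : ℝ :=
  2 ^ n * (Nat.factorial (n / 2) : ℝ) *
    Real.Gamma (ν + (((n + 1) / 2 : ℕ) : ℝ) + 1 / 2) / Real.Gamma (ν + 1 / 2)

/-- generalized Hermite polynomials `H_n^ν(x)`. -/
def HGen (ν : ℝ) (n : ℕ) (x : ℝ) : ℝ :=
  (Nat.factorial n : ℝ) * ∑ k ∈ Finset.range (n / 2 + 1),
    (-1 : ℝ) ^ k * (2 * x) ^ (n - 2 * k) / ((Nat.factorial k : ℝ) * gammaGen ν (n - 2 * k))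

/-- Rosenblum generalized Hermite functions `φ_n^ν(x)`. -/
def phiGen (ν : ℝ) (n : ℕ) (x : ℝ) : ℝ :=
  Real.sqrt (gammaGen ν n / Real.Gamma (ν + 1 / 2)) * Real.exp (-x ^ 2 / 2) *
    HGen ν n x / ((2 : ℝ) ^ ((n : ℝ) / 2) * (Nat.factorial n : ℝ))

/-- symmetric q-number `[x]_s = (s^x - s^{-x})/(s - s^{-1})`. -/
def qNumSym (s x : ℝ) : ℝ := (s ^ x - s ^ (-x)) / (s - s⁻¹)

/-- Euler q-exponential `e_q(z) = Σ z^k/(q;q)_k`. -/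
def eExp (q z : ℝ) : ℝ := ∑' k : ℕ, z ^ k / qPoch q q k

/-- generalized q-exponential `E_{q,α}(z) = Σ q^{k(k-1)/2} z^k/(q;q)_{k,α}`. -/
def bigEAlpha (q α z : ℝ) : ℝ := ∑' k : ℕ, q ^ (k * (k - 1) / 2) * z ^ k / qPochAlpha q α k

/-- generalized q-exponential `e_{q,α}(z) = Σ z^k/(q;q)_{k,α}`. -/
def eExpAlpha (q α z : ℝ) : ℝ := ∑' k : ℕ, z ^ k / qPochAlpha q α k

/-!
Since `ω_α(qx) = (1 + q^{-2α-1}x²) ω_α(x)`, the square roots of the weight factor out, and the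
claim reduces to `d_{n+1,α}(1 - q^{n+1}) = d_{n,α} q^{n+1/2} √((1-q)⟦n+1⟧_{q,α})` together with
the three-term identity, for `g_n = h̃_{n,α} / (q;q)_n`,
`(q^{2α+1} + x²) g_n(qx) - q^{(2α+1)θ(n+1)} g_n(x) = q^n (1-q)⟦n+1⟧_{q,α} x g_{n+1}(x)`.
With `(1-q)⟦m⟧_{q,α} = 1 - q^m q^{(2α+1)θ(m)}` it holds summand by summand: the `k`-th summand
on the right is the `k`-th summand of `x² g_n(qx)` plus the `(k-1)`-st summand of
`q^{2α+1} g_n(qx) - q^{(2α+1)θ(n+1)} g_n(x)`, so the sums telescope, and only the top summand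
depends on the parity of `n`.
-/

variable {q α : ℝ}

@[simp]
lemma qPoch_zero (a r : ℝ) : qPoch a r 0 = 1 :=
  Finset.prod_range_zero _

lemma qPoch_succ (a r : ℝ) (n : ℕ) : qPoch a r (n + 1) = qPoch a r n * (1 - a * r ^ n) :=
  Finset.prod_range_succ _ _

lemma qPoch_pos {a r : ℝ} (ha0 : 0 ≤ a) (ha1 : a < 1) (hr0 : 0 ≤ r) (hr1 : r ≤ 1) (n : ℕ) :
    0 < qPoch a r n :=
  Finset.prod_pos fun k _ => by
    have : a * r ^ k ≤ a := mul_le_of_le_one_right ha0 (pow_le_one₀ hr0 hr1)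
    linarith

lemma qNumber_pos (hq0 : 0 < q) (hq1 : q < 1) {s : ℝ} (hs : 0 < s) : 0 < qNumber q s :=
  div_pos (sub_pos.2 (Real.rpow_lt_one hq0.le hq1 hs)) (sub_pos.2 hq1)

lemma qNumAlpha_pos (hq0 : 0 < q) (hq1 : q < 1) (hα : -1 < α) {n : ℕ} (hn : n ≠ 0) :
    0 < qNumAlpha q α n := by
  have : (1 : ℝ) ≤ n := Nat.one_le_cast.2 (Nat.pos_of_ne_zero hn)
  unfold qNumAlpha
  split_ifs <;> exact qNumber_pos hq0 hq1 (by linarith)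

@[simp]
lemma qPochAlpha_zero : qPochAlpha q α 0 = 1 := by
  simp [qPochAlpha, qFactAlpha]

lemma qPochAlpha_succ (n : ℕ) :
    qPochAlpha q α (n + 1) = qPochAlpha q α n * ((1 - q) * qNumAlpha q α (n + 1)) := by
  simp only [qPochAlpha, qFactAlpha, Finset.prod_range_succ, pow_succ]
  ring

lemma qPochAlpha_pos (hq0 : 0 < q) (hq1 : q < 1) (hα : -1 < α) (n : ℕ) :
    0 < qPochAlpha q α n := by
  induction n with
  | zero => simp
  | succ n ih =>
    rw [qPochAlpha_succ]
    exact mul_pos ih (mul_pos (sub_pos.2 hq1) (qNumAlpha_pos hq0 hq1 hα n.succ_ne_zero))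

def qPowTheta (q α : ℝ) (m : ℕ) : ℝ := q ^ ((2 * α + 1) * theta m)

lemma one_sub_mul_qNumAlpha (hq0 : 0 < q) (hq1 : q ≠ 1) (m : ℕ) :
    (1 - q) * qNumAlpha q α m = 1 - q ^ m * qPowTheta q α m := by
  have h1q : 1 - q ≠ 0 := sub_ne_zero.2 hq1.symm
  unfold qNumAlpha qNumber qPowTheta theta
  rcases Nat.mod_two_eq_zero_or_one m with h | h
  · simp only [h, if_true, zero_ne_one, if_false, mul_zero, Real.rpow_zero, mul_one,
      Real.rpow_natCast]
    field_simp
  · rw [if_neg (by omega), if_pos h, mul_one, add_assoc, Real.rpow_add hq0, Real.rpow_natCast]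
    field_simp

lemma qPochAlpha_succ' (hq0 : 0 < q) (hq1 : q ≠ 1) (n : ℕ) :
    qPochAlpha q α (n + 1) = qPochAlpha q α n * (1 - q ^ (n + 1) * qPowTheta q α (n + 1)) := by
  rw [qPochAlpha_succ, one_sub_mul_qNumAlpha hq0 hq1]

lemma one_sub_pow_mul_qPowTheta_pos (hq0 : 0 < q) (hq1 : q < 1) (hα : -1 < α) {m : ℕ}
    (hm : m ≠ 0) : 0 < 1 - q ^ m * qPowTheta q α m := by
  rw [← one_sub_mul_qNumAlpha hq0 hq1.ne]
  exact mul_pos (sub_pos.2 hq1) (qNumAlpha_pos hq0 hq1 hα hm)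

lemma qPowTheta_add_two_mul (m j : ℕ) : qPowTheta q α (m + 2 * j) = qPowTheta q α m := by
  simp only [qPowTheta, theta, Nat.add_mul_mod_self_left]

lemma qPowTheta_mul_succ (m : ℕ) :
    qPowTheta q α m * qPowTheta q α (m + 1) = q ^ (2 * α + 1) := by
  unfold qPowTheta theta
  rcases Nat.mod_two_eq_zero_or_one m with h | h
  · rw [if_neg (by omega), if_pos (by omega)]; simp
  · rw [if_pos h, if_neg (by omega)]; simp

@[simp]
lemma qPowTheta_zero : qPowTheta q α 0 = 1 := by
  simp [qPowTheta, theta]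

lemma qPowTheta_one : qPowTheta q α 1 = q ^ (2 * α + 1) := by
  simp [qPowTheta, theta]

lemma tprod_one_add_mul_pow_eq (c : ℝ) {r : ℝ} (hr0 : 0 ≤ r) (hr1 : r < 1) :
    ∏' k : ℕ, (1 + c * r ^ k) = (1 + c) * ∏' k : ℕ, (1 + c * r * r ^ k) := by
  have hmul : Multipliable fun k : ℕ => 1 + c * r * r ^ k :=
    Real.multipliable_one_add_of_summable
      ((summable_geometric_of_lt_one hr0 hr1).mul_left (c * r))
  rw [tprod_eq_zero_mul' (f := fun k : ℕ => 1 + c * r ^ k) (by simpa only [pow_succ',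
    mul_assoc] using hmul)]
  simp only [pow_zero, mul_one, pow_succ', mul_assoc]

lemma omegaAlpha_eq (x : ℝ) :
    omegaAlpha q α x = (∏' k : ℕ, (1 + q ^ (-(2 * α + 1)) * x ^ 2 * (q ^ 2) ^ k))⁻¹ := by
  simp only [omegaAlpha, pow_mul]

lemma omegaAlpha_mul_left (hq0 : 0 < q) (hq1 : q < 1) (x : ℝ) :
    omegaAlpha q α (q * x) = (1 + q ^ (-(2 * α + 1)) * x ^ 2) * omegaAlpha q α x := by
  have hc : 0 < 1 + q ^ (-(2 * α + 1)) * x ^ 2 := by positivity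
  have hqx : q ^ (-(2 * α + 1)) * (q * x) ^ 2 = q ^ (-(2 * α + 1)) * x ^ 2 * q ^ 2 := by ring
  rw [omegaAlpha_eq, omegaAlpha_eq, hqx,
    tprod_one_add_mul_pow_eq (q ^ (-(2 * α + 1)) * x ^ 2) (by positivity : (0 : ℝ) ≤ q ^ 2)
      (by nlinarith), mul_inv, ← mul_assoc, mul_inv_cancel₀ hc.ne', one_mul]

lemma sum_range_succ_add_sum_range_succ_of_step {M : Type*} [AddCommMonoid M] (T S R : ℕ → M)
    (m : ℕ) (h0 : T 0 = R 0) (hstep : ∀ i < m, T (i + 1) + S i = R (i + 1)) :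
    ∑ k ∈ Finset.range (m + 1), T k + ∑ k ∈ Finset.range (m + 1), S k
      = ∑ k ∈ Finset.range (m + 1), R k + S m := by
  rw [Finset.sum_range_succ' T, Finset.sum_range_succ S, Finset.sum_range_succ' R, h0,
    ← Finset.sum_congr rfl fun i hi => hstep i (Finset.mem_range.1 hi), Finset.sum_add_distrib]
  abel

def hTildeTerm (q α : ℝ) (n k : ℕ) (x : ℝ) : ℝ :=
  (-1 : ℝ) ^ k * q ^ ((k * (2 * k + 1) : ℤ) - (2 * n * k : ℤ)) * x ^ (n - 2 * k) /
    (qPoch (q ^ 2) (q ^ 2) k * qPochAlpha q α (n - 2 * k))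

lemma hTilde_eq_sum (n : ℕ) (x : ℝ) :
    hTilde q α n x = qPoch q q n * ∑ k ∈ Finset.range (n / 2 + 1), hTildeTerm q α n k x :=
  rfl

lemma hTildeTerm_of_eq_add (hq : q ≠ 0) {n k j : ℕ} (h : n = 2 * k + j) (x : ℝ) :
    hTildeTerm q α n k x = (-1 : ℝ) ^ k * q ^ (k * (2 * k + 1)) / q ^ (2 * n * k) * x ^ j /
      (qPoch (q ^ 2) (q ^ 2) k * qPochAlpha q α j) := by
  have hexp : ((k * (2 * k + 1) : ℤ) - (2 * n * k : ℤ))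
      = ((k * (2 * k + 1) : ℕ) : ℤ) - ((2 * n * k : ℕ) : ℤ) := by push_cast; ring
  rw [hTildeTerm, hexp, zpow_sub₀ hq, zpow_natCast, zpow_natCast, show n - 2 * k = j by omega]
  ring

lemma hTildeTerm_creation_zero (hq0 : 0 < q) (hq1 : q < 1) (hα : -1 < α) (n : ℕ) (x : ℝ) :
    x ^ 2 * hTildeTerm q α n 0 (q * x)
      = q ^ n * ((1 - q) * qNumAlpha q α (n + 1)) * x * hTildeTerm q α (n + 1) 0 x := by
  have hPA := (qPochAlpha_pos hq0 hq1 hα n).ne'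
  have hN := (qNumAlpha_pos hq0 hq1 hα n.succ_ne_zero).ne'
  have h1q := (sub_pos.2 hq1).ne'
  rw [hTildeTerm_of_eq_add hq0.ne' (j := n) (by ring),
    hTildeTerm_of_eq_add hq0.ne' (j := n + 1) (by ring), qPochAlpha_succ, qPoch_zero]
  field_simp
  ring

lemma hTildeTerm_creation_succ (hq0 : 0 < q) (hq1 : q < 1) (hα : -1 < α) {n : ℕ} (k t : ℕ)
    (hn : n = 2 * (k + 1) + t) (x : ℝ) :
    x ^ 2 * hTildeTerm q α n (k + 1) (q * x)
        + (q ^ (2 * α + 1) * hTildeTerm q α n k (q * x)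
          - qPowTheta q α (n + 1) * hTildeTerm q α n k x)
      = q ^ n * ((1 - q) * qNumAlpha q α (n + 1)) * x * hTildeTerm q α (n + 1) (k + 1) x := by
  have hq := hq0.ne'
  have hE : qPowTheta q α (n + 1) = qPowTheta q α (t + 1) := by
    rw [hn, show 2 * (k + 1) + t + 1 = t + 1 + 2 * (k + 1) by ring, qPowTheta_add_two_mul]
  have hP2 : qPoch (q ^ 2) (q ^ 2) (k + 1) = qPoch (q ^ 2) (q ^ 2) k * (1 - q ^ (2 * k + 2)) := by
    rw [qPoch_succ]; ring
  have hPA2 : qPochAlpha q α (t + 2)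
      = qPochAlpha q α (t + 1) * (1 - q ^ (t + 2) * qPowTheta q α t) := by
    rw [qPochAlpha_succ' hq0 hq1.ne, ← qPowTheta_add_two_mul t 1]
  have hP2k := (qPoch_pos (by positivity) (by nlinarith) (by positivity) (by nlinarith) k :
    0 < qPoch (q ^ 2) (q ^ 2) k).ne'
  have hw : 1 - q ^ (2 * k + 2) ≠ 0 := (sub_pos.2 (pow_lt_one₀ hq0.le hq1 (by omega))).ne'
  have hPAt := (qPochAlpha_pos hq0 hq1 hα t).ne'
  have hv1 := (one_sub_pow_mul_qPowTheta_pos hq0 hq1 hα t.succ_ne_zero).ne'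
  have hv2 : 1 - q ^ (t + 2) * qPowTheta q α t ≠ 0 := by
    rw [← qPowTheta_add_two_mul t 1]
    exact (one_sub_pow_mul_qPowTheta_pos hq0 hq1 hα (by omega)).ne'
  rw [hTildeTerm_of_eq_add hq (j := t) hn, hTildeTerm_of_eq_add hq (j := t + 2) (by omega),
    hTildeTerm_of_eq_add hq (j := t + 2) (by omega),
    hTildeTerm_of_eq_add hq (j := t + 1) (by omega), one_sub_mul_qNumAlpha hq0 hq1.ne, hE,
    ← qPowTheta_mul_succ t, hPA2, qPochAlpha_succ' hq0 hq1.ne t, hP2, hn]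
  generalize hv1' : 1 - q ^ (t + 1) * qPowTheta q α (t + 1) = v1 at hv1 ⊢
  generalize hv2' : 1 - q ^ (t + 2) * qPowTheta q α t = v2 at hv2 ⊢
  field_simp
  subst hv1' hv2'
  ring

lemma hTildeTerm_creation_last_of_even (hq0 : 0 < q) {n : ℕ} (k : ℕ) (hn : n = 2 * k) (x : ℝ) :
    q ^ (2 * α + 1) * hTildeTerm q α n k (q * x) - qPowTheta q α (n + 1) * hTildeTerm q α n k x
      = 0 := by
  rw [hTildeTerm_of_eq_add hq0.ne' (j := 0) hn, hTildeTerm_of_eq_add hq0.ne' (j := 0) hn, hn,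
    show 2 * k + 1 = 1 + 2 * k by ring, qPowTheta_add_two_mul 1 k, qPowTheta_one]
  ring

lemma hTildeTerm_creation_last_of_odd (hq0 : 0 < q) (hq1 : q < 1) (hα : -1 < α) {n : ℕ} (k : ℕ)
    (hn : n = 2 * k + 1) (x : ℝ) :
    q ^ (2 * α + 1) * hTildeTerm q α n k (q * x) - qPowTheta q α (n + 1) * hTildeTerm q α n k x
      = q ^ n * ((1 - q) * qNumAlpha q α (n + 1)) * x * hTildeTerm q α (n + 1) (k + 1) x := by
  have hq := hq0.ne'
  have hP2 : qPoch (q ^ 2) (q ^ 2) (k + 1) = qPoch (q ^ 2) (q ^ 2) k * (1 - q ^ (2 * k + 2)) := by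
    rw [qPoch_succ]; ring
  have hPA1 : qPochAlpha q α 1 = 1 - q * qPowTheta q α 1 := by
    simpa using qPochAlpha_succ' (α := α) hq0 hq1.ne 0
  have hP2k := (qPoch_pos (by positivity) (by nlinarith) (by positivity) (by nlinarith) k :
    0 < qPoch (q ^ 2) (q ^ 2) k).ne'
  have hw : 1 - q ^ (2 * k + 2) ≠ 0 := (sub_pos.2 (pow_lt_one₀ hq0.le hq1 (by omega))).ne'
  have hv : 1 - q * qPowTheta q α 1 ≠ 0 := by
    simpa using (one_sub_pow_mul_qPowTheta_pos hq0 hq1 hα one_ne_zero).ne'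
  rw [hTildeTerm_of_eq_add hq (j := 1) hn, hTildeTerm_of_eq_add hq (j := 1) hn,
    hTildeTerm_of_eq_add hq (j := 0) (by omega), one_sub_mul_qNumAlpha hq0 hq1.ne,
    hn, show 2 * k + 1 + 1 = 0 + 2 * (k + 1) by ring, qPowTheta_add_two_mul, hPA1, hP2,
    ← qPowTheta_one]
  simp only [qPowTheta_zero, qPochAlpha_zero]
  generalize hv' : 1 - q * qPowTheta q α 1 = v at hv ⊢
  field_simp
  subst hv'
  ring

lemma sum_hTildeTerm_creation (hq0 : 0 < q) (hq1 : q < 1) (hα : -1 < α) (n : ℕ) (x : ℝ) :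
    (q ^ (2 * α + 1) + x ^ 2) * ∑ k ∈ Finset.range (n / 2 + 1), hTildeTerm q α n k (q * x)
        - qPowTheta q α (n + 1) * ∑ k ∈ Finset.range (n / 2 + 1), hTildeTerm q α n k x
      = q ^ n * ((1 - q) * qNumAlpha q α (n + 1)) * x
          * ∑ k ∈ Finset.range ((n + 1) / 2 + 1), hTildeTerm q α (n + 1) k x := by
  set S : ℕ → ℝ := fun k =>
    q ^ (2 * α + 1) * hTildeTerm q α n k (q * x) - qPowTheta q α (n + 1) * hTildeTerm q α n k x
  set R : ℕ → ℝ := fun k =>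
    q ^ n * ((1 - q) * qNumAlpha q α (n + 1)) * x * hTildeTerm q α (n + 1) k x
  have htele := sum_range_succ_add_sum_range_succ_of_step
    (fun k => x ^ 2 * hTildeTerm q α n k (q * x)) S R (n / 2) (hTildeTerm_creation_zero hq0 hq1 hα n x)
    fun i hi => hTildeTerm_creation_succ hq0 hq1 hα i (n - 2 * (i + 1)) (by omega) x
  have hlast : ∑ k ∈ Finset.range (n / 2 + 1), R k + S (n / 2)
      = ∑ k ∈ Finset.range ((n + 1) / 2 + 1), R k := by
    rcases Nat.even_or_odd' n with ⟨m, rfl | rfl⟩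
    · rw [show (2 * m + 1) / 2 = m by omega, show 2 * m / 2 = m by omega,
        add_eq_left.2 (hTildeTerm_creation_last_of_even hq0 m rfl x)]
    · rw [show (2 * m + 1 + 1) / 2 = m + 1 by omega, show (2 * m + 1) / 2 = m by omega,
        Finset.sum_range_succ _ (m + 1)]
      exact congrArg _ (hTildeTerm_creation_last_of_odd hq0 hq1 hα m rfl x)
  have hsum := htele.trans hlast
  simp only [S, R, ← Finset.mul_sum, Finset.sum_sub_distrib] at hsum
  linear_combination hsum

lemma hTilde_creation (hq0 : 0 < q) (hq1 : q < 1) (hα : -1 < α) (n : ℕ) (x : ℝ) :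
    q ^ (2 * α + 1) * ((1 + q ^ (-(2 * α + 1)) * x ^ 2) * hTilde q α n (q * x)
        - q ^ (-((2 * α + 1) * theta n)) * hTilde q α n x) * (1 - q ^ (n + 1))
      = q ^ n * ((1 - q) * qNumAlpha q α (n + 1)) * x * hTilde q α (n + 1) x := by
  have hu : q ^ (2 * α + 1) * q ^ (-(2 * α + 1)) = 1 := by
    rw [← Real.rpow_add hq0, add_neg_cancel, Real.rpow_zero]
  have hE : q ^ (2 * α + 1) * q ^ (-((2 * α + 1) * theta n)) = qPowTheta q α (n + 1) := by
    rw [← qPowTheta_mul_succ n, qPowTheta, mul_right_comm, ← Real.rpow_add hq0, add_neg_cancel,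
      Real.rpow_zero, one_mul]
  rw [hTilde_eq_sum, hTilde_eq_sum, hTilde_eq_sum, qPoch_succ]
  linear_combination (qPoch q q n * (1 - q ^ (n + 1))) * sum_hTildeTerm_creation hq0 hq1 hα n x
    + (qPoch q q n * (1 - q ^ (n + 1)) * x ^ 2
        * ∑ k ∈ Finset.range (n / 2 + 1), hTildeTerm q α n k (q * x)) * hu
    - (qPoch q q n * (1 - q ^ (n + 1)) * ∑ k ∈ Finset.range (n / 2 + 1), hTildeTerm q α n k x) * hE

lemma dAlpha_succ (hq0 : 0 < q) (hq1 : q < 1) (hα : -1 < α) (n : ℕ) :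
    dAlpha q α (n + 1) * (1 - q ^ (n + 1))
      = dAlpha q α n * q ^ ((n : ℝ) + 1 / 2) * √((1 - q) * qNumAlpha q α (n + 1)) := by
  have hP := (qPoch_pos hq0.le hq1 hq0.le hq1.le n).ne'
  have hw : 1 - q * q ^ n ≠ 0 := by
    rw [← pow_succ']; exact (sub_pos.2 (pow_lt_one₀ hq0.le hq1 n.succ_ne_zero)).ne'
  have hexp : q ^ (((n + 1 : ℕ) : ℝ) ^ 2 / 2) = q ^ ((n : ℝ) ^ 2 / 2) * q ^ ((n : ℝ) + 1 / 2) := by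
    rw [← Real.rpow_add hq0]; push_cast; ring_nf
  unfold dAlpha
  rw [qPochAlpha_succ, Real.sqrt_mul (qPochAlpha_pos hq0 hq1 hα n).le, qPoch_succ, hexp]
  field_simp
  ring

lemma sqrt_mul_phiQ_mul_left_sub (hq0 : 0 < q) (hq1 : q < 1) (n : ℕ) (x c : ℝ) :
    √(1 + q ^ (-(2 * α + 1)) * x ^ 2) * phiQ q α n (q * x) - c * phiQ q α n x
      = dAlpha q α n * √(omegaAlpha q α x)
          * ((1 + q ^ (-(2 * α + 1)) * x ^ 2) * hTilde q α n (q * x) - c * hTilde q α n x) := by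
  have hB : 0 ≤ 1 + q ^ (-(2 * α + 1)) * x ^ 2 := by positivity
  have hω : √(1 + q ^ (-(2 * α + 1)) * x ^ 2) * √(omegaAlpha q α (q * x))
      = (1 + q ^ (-(2 * α + 1)) * x ^ 2) * √(omegaAlpha q α x) := by
    rw [omegaAlpha_mul_left hq0 hq1, Real.sqrt_mul hB, ← mul_assoc, Real.mul_self_sqrt hB]
  unfold phiQ
  linear_combination (dAlpha q α n * hTilde q α n (q * x)) * hω

/-- the creation operator raises the index of the deformed Hermite functions. -/
theorem stmt_6 (q α : ℝ) (hq0 : 0 < q) (hq1 : q < 1) (hα : -1 < α) (n : ℕ)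
    (x : ℝ) (hx : x ≠ 0) :
    q ^ (2 * α + 3 / 2) / (Real.sqrt (1 - q) * x) *
      (Real.sqrt (1 + q ^ (-(2 * α + 1)) * x ^ 2) * phiQ q α n (q * x) -
        q ^ (-((2 * α + 1) * theta n)) * phiQ q α n x) =
    Real.sqrt (qNumAlpha q α (n + 1)) * phiQ q α (n + 1) x := by
  have hH := hTilde_creation hq0 hq1 hα n x
  have hd := dAlpha_succ hq0 hq1 hα n
  have hs : 0 < √(1 - q) := Real.sqrt_pos.2 (sub_pos.2 hq1)
  have hs2 : √(1 - q) ^ 2 = 1 - q := Real.sq_sqrt (sub_pos.2 hq1).le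
  have ha2 : √(qNumAlpha q α (n + 1)) ^ 2 = qNumAlpha q α (n + 1) :=
    Real.sq_sqrt (qNumAlpha_pos hq0 hq1 hα n.succ_ne_zero).le
  have hw : 1 - q ^ (n + 1) ≠ 0 := (sub_pos.2 (pow_lt_one₀ hq0.le hq1 n.succ_ne_zero)).ne'
  have hq32 : q ^ (2 * α + 3 / 2) = q ^ (2 * α + 1) * q ^ ((1 : ℝ) / 2) := by
    rw [← Real.rpow_add hq0]; ring_nf
  rw [Real.sqrt_mul (sub_pos.2 hq1).le, Real.rpow_add hq0, Real.rpow_natCast] at hd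
  rw [sqrt_mul_phiQ_mul_left_sub hq0 hq1, phiQ, hq32, div_mul_eq_mul_div,
    div_eq_iff (mul_ne_zero hs.ne' hx)]
  refine mul_right_cancel₀ hw ?_
  linear_combination (q ^ ((1 : ℝ) / 2) * dAlpha q α n * √(omegaAlpha q α x)) * hH
    - (√(qNumAlpha q α (n + 1)) * √(omegaAlpha q α x) * hTilde q α (n + 1) x * √(1 - q) * x) * hd
    - (q ^ ((1 : ℝ) / 2) * dAlpha q α n * √(omegaAlpha q α x) * q ^ n * x * hTilde q α (n + 1) x)
      * ((1 - q) * ha2 + √(qNumAlpha q α (n + 1)) ^ 2 * hs2)
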